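/- The kernel of ρ is contained in yH ш̃ yH: every u ∈ yH with ρ(u) = 0 lies in the ℚ-linear span of the elements w₁ ш̃ w₂ with w₁, w₂ ∈ yH. -/

import Mathlib

open scoped BigOperators

/-- `H¹`: the ℚ-vector space with basis the words `z_{k₁}⋯z_{k_r}` in the letters
`z_k` (`k` a positive integer), encoded as finitely supported functions on lists. -/
abbrev H1 : Type := List ℕ+ →₀ ℚ

/-- The basis word `z_{k₁}⋯z_{k_r}` of `H¹` (the empty list is the unit `1`). -/
noncomputable def W (l : List ℕ+) : H1 := Finsupp.single l 1

/-- Left multiplication by the letter `z_k` (linear extension of `w ↦ z_k w`). -/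
noncomputable def consL (k : ℕ+) (h : H1) : H1 := Finsupp.mapDomain (fun w => k :: w) h

/-- Right multiplication by the letter `z_k` (linear extension of `w ↦ w z_k`). -/
noncomputable def mulRk (k : ℕ+) (h : H1) : H1 := Finsupp.mapDomain (fun w => w ++ [k]) h

/-- The harmonic (stuffle) product on words:
`1 ∗ u = u ∗ 1 = u`, `z_k u ∗ z_l v = z_k(u ∗ z_l v) + z_l(z_k u ∗ v) + z_{k+l}(u ∗ v)`. -/
noncomputable def harmW : List ℕ+ → List ℕ+ → H1
  | [], v => W v
  | u, [] => W u
  | k :: u, l :: v =>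
      consL k (harmW u (l :: v)) + consL l (harmW (k :: u) v) + consL (k + l) (harmW u v)
  termination_by u v => u.length + v.length

/-- The harmonic product `∗` on `H¹`, as the ℚ-bilinear extension of `harmW`. -/
noncomputable def harm (g h : H1) : H1 :=
  g.sum fun u c => h.sum fun v d => (c * d) • harmW u v

/-- The product `ш̃` on words in the letters `z_k`:
`1 ш̃ u = u ш̃ 1 = u`, `z_k u ш̃ z_l v = z_k(u ш̃ z_l v) + z_l(z_k u ш̃ v)`. -/
noncomputable def shtW : List ℕ+ → List ℕ+ → H1
  | [], v => W v
  | u, [] => W u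
  | k :: u, l :: v => consL k (shtW u (l :: v)) + consL l (shtW (k :: u) v)
  termination_by u v => u.length + v.length

/-- The shuffle product `ш̃` on `H¹` (on the alphabet `z₁, z₂, …`), bilinear extension. -/
noncomputable def sht (g h : H1) : H1 :=
  g.sum fun u c => h.sum fun v d => (c * d) • shtW u v

/-- Addition of a natural number to a positive natural number. -/
def pplus (k : ℕ+) (e : ℕ) : ℕ+ := ⟨(k : ℕ) + e, by have := k.pos; omega⟩

/-- `σ_m` on words: `σ_m(z_{k₁}⋯z_{k_r}) = Σ_{e₁+⋯+e_r=m} ∏_j C(k_j+e_j-1, e_j) z_{k₁+e₁}⋯z_{k_r+e_r}`,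
which is the word formula for `σ_m(1) = δ_{m,0}`, `σ_m(yw) = y(w ш x^m)`. -/
noncomputable def sigW : ℕ → List ℕ+ → H1
  | m, [] => if m = 0 then W [] else 0
  | m, k :: ks => ∑ e ∈ Finset.range (m + 1),
      ((((k : ℕ) + e - 1).choose e : ℚ)) • consL (pplus k e) (sigW (m - e) ks)
  termination_by m ks => ks.length

/-- `σ_m : H¹ → H¹`, linear extension. -/
noncomputable def sig (m : ℕ) (h : H1) : H1 := h.sum fun ks c => c • sigW m ks

/-- `S` on words: the word formula for `S(1) = 1`, `S(yw) = y S₁(w)` where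
`S₁(x) = x`, `S₁(y) = x + y`; explicitly `S(z_{k₁}⋯z_{k_r})` is the sum over all ways of
replacing separating commas by `+`. -/
noncomputable def StW : List ℕ+ → H1
  | [] => W []
  | [k] => W [k]
  | k :: l :: ks => consL k (StW (l :: ks)) + StW ((k + l) :: ks)
  termination_by ks => ks.length

/-- `S : H¹ → H¹`, linear extension. -/
noncomputable def St (h : H1) : H1 := h.sum fun ks c => c • StW ks

/-- `S̃ = S ∘ d` on words, where `d(x) = x`, `d(y) = -y`, so `d` multiplies a word of
depth `r` by `(-1)^r`. -/
noncomputable def SttW (ks : List ℕ+) : H1 := ((-1 : ℚ)) ^ ks.length • StW ks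

/-- `S̃ = S ∘ d : H¹ → H¹`, linear extension. -/
noncomputable def Stt (h : H1) : H1 := h.sum fun ks c => c • SttW ks

/-- `ψ` on words: `ψ(z_{k₁}⋯z_{k_r}) = Σ_{i=0}^{r-1} z_{k₁}⋯z_{k_i} ∗ S̃(σ₁(z_{k_r}⋯z_{k_{i+1}}))`. -/
noncomputable def psiW (ks : List ℕ+) : H1 :=
  ∑ i ∈ Finset.range ks.length, harm (W (ks.take i)) (Stt (sigW 1 ((ks.drop i).reverse)))

/-- `ψ : yH → H¹`, linear extension. -/
noncomputable def psi (h : H1) : H1 := h.sum fun ks c => c • psiW ks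

/-- `ψ̄` on words: `ψ̄(z_{k₁}⋯z_{k_r}) = Σ_{i=0}^{r-1} (-1)^{r-i} z_{k₁}⋯z_{k_i} ш̃ σ₁(z_{k_r}⋯z_{k_{i+1}})`. -/
noncomputable def psibW (ks : List ℕ+) : H1 :=
  ∑ i ∈ Finset.range ks.length,
    ((-1 : ℚ)) ^ (ks.length - i) • sht (W (ks.take i)) (sigW 1 ((ks.drop i).reverse))

/-- `ψ̄ : yH → H¹`, linear extension. -/
noncomputable def psib (h : H1) : H1 := h.sum fun ks c => c • psibW ks

/-- `ρ` on words:
`ρ(z_{k₁}⋯z_{k_r}) = Σ_{i=1}^{r} (-1)^{r-i} (z_{k₁}⋯z_{k_{i-1}} ш̃ z_{k_r}⋯z_{k_{i+1}}) z_{k_i}`. -/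
noncomputable def rhoW (ks : List ℕ+) : H1 :=
  ∑ i : Fin ks.length, ((-1 : ℚ)) ^ (ks.length - 1 - (i : ℕ)) •
    mulRk (ks.get i) (sht (W (ks.take (i : ℕ))) (W ((ks.drop ((i : ℕ) + 1)).reverse)))

/-- `ρ : yH → yH`, linear extension. -/
noncomputable def rho (h : H1) : H1 := h.sum fun ks c => c • rhoW ks

/-- `yH ⊆ H¹`: the span of the nonempty words `z_{k₁}⋯z_{k_r}` (`r ≥ 1`). -/
noncomputable def yH1 : Submodule ℚ H1 := Submodule.span ℚ {h | ∃ k ks, h = W (k :: ks)}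

/-- `yH ∗ yH`: the ℚ-span of the harmonic products `w₁ ∗ w₂` with `w₁, w₂ ∈ yH`. -/
noncomputable def harmSpan : Submodule ℚ H1 :=
  Submodule.span ℚ {h | ∃ u ∈ yH1, ∃ v ∈ yH1, h = harm u v}

/-- `yH ш̃ yH`: the ℚ-span of the products `w₁ ш̃ w₂` with `w₁, w₂ ∈ yH`. -/
noncomputable def shtSpan : Submodule ℚ H1 :=
  Submodule.span ℚ {h | ∃ u ∈ yH1, ∃ v ∈ yH1, h = sht u v}

lemma shtW_nil_left (v : List ℕ+) : shtW [] v = W v := by rw [shtW]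
lemma shtW_nil_right (u : List ℕ+) : shtW u [] = W u := by
  cases u with
  | nil => rw [shtW]
  | cons k u => rw [shtW]; simp
lemma shtW_cons (k l : ℕ+) (u v : List ℕ+) :
    shtW (k :: u) (l :: v) = consL k (shtW u (l :: v)) + consL l (shtW (k :: u) v) := by
  rw [shtW]
lemma consL_W (k : ℕ+) (w : List ℕ+) : consL k (W w) = W (k :: w) := by
  simp [consL, W, Finsupp.mapDomain_single]
lemma mulRk_W (k : ℕ+) (w : List ℕ+) : mulRk k (W w) = W (w ++ [k]) := by
  simp [mulRk, W, Finsupp.mapDomain_single]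
lemma consL_add (k : ℕ+) (g h : H1) : consL k (g + h) = consL k g + consL k h :=
  Finsupp.mapDomain_add
lemma mulRk_add (k : ℕ+) (g h : H1) : mulRk k (g + h) = mulRk k g + mulRk k h :=
  Finsupp.mapDomain_add
lemma consL_smul (k : ℕ+) (c : ℚ) (h : H1) : consL k (c • h) = c • consL k h :=
  Finsupp.mapDomain_smul c h
lemma mulRk_smul (k : ℕ+) (c : ℚ) (h : H1) : mulRk k (c • h) = c • mulRk k h :=
  Finsupp.mapDomain_smul c h
lemma consL_mulRk (c a : ℕ+) (h : H1) : consL c (mulRk a h) = mulRk a (consL c h) := by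
  rw [consL, mulRk, ← Finsupp.mapDomain_comp, consL, mulRk, ← Finsupp.mapDomain_comp]
  rfl

lemma shtW_snoc_aux : ∀ n (p q : List ℕ+) (a b : ℕ+), p.length + q.length ≤ n →
    shtW (p ++ [a]) (q ++ [b]) =
      mulRk a (shtW p (q ++ [b])) + mulRk b (shtW (p ++ [a]) q) := by
  intro n
  induction n with
  | zero =>
    intro p q a b h
    cases p <;> cases q <;> simp at h
    simp only [List.nil_append, shtW_nil_left, shtW_nil_right, mulRk_W]
    rw [show ([a] : List ℕ+) ++ [b] = [a, b] by rfl]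
    rw [shtW_cons, shtW_nil_left, shtW_nil_right, consL_W, consL_W]
    simp [add_comm]
  | succ n ih =>
    intro p q a b hle
    match p, q with
    | [], [] =>
      simp only [List.nil_append, shtW_nil_left, shtW_nil_right, mulRk_W]
      rw [show ([a] : List ℕ+) ++ [b] = [a, b] by rfl]
      rw [shtW_cons, shtW_nil_left, shtW_nil_right, consL_W, consL_W]
      simp [add_comm]
    | [], d :: q' =>
      have h1 := ih [] q' a b (by simp at hle ⊢; omega)
      simp only [List.cons_append, List.nil_append] at h1 ⊢
      rw [shtW_cons, h1, shtW_cons a d]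
      simp [shtW_nil_left, shtW_nil_right, consL_add, mulRk_add, consL_W, mulRk_W,
        consL_mulRk]
      abel
    | c :: p', [] =>
      have h1 := ih p' [] a b (by simp at hle ⊢; omega)
      simp only [List.cons_append, List.nil_append] at h1 ⊢
      rw [shtW_cons, h1, shtW_cons c b]
      simp [shtW_nil_left, shtW_nil_right, consL_add, mulRk_add, consL_W, mulRk_W,
        consL_mulRk]
      abel
    | c :: p', d :: q' =>
      have h1 := ih p' (d :: q') a b (by simp at hle ⊢; omega)
      have h2 := ih (c :: p') q' a b (by simp at hle ⊢; omega)
      simp only [List.cons_append, List.nil_append] at h1 h2 ⊢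
      rw [shtW_cons, h1, h2, shtW_cons c d, shtW_cons c d]
      simp only [consL_add, mulRk_add, consL_mulRk]
      abel

lemma shtW_snoc (p q : List ℕ+) (a b : ℕ+) :
    shtW (p ++ [a]) (q ++ [b]) =
      mulRk a (shtW p (q ++ [b])) + mulRk b (shtW (p ++ [a]) q) :=
  shtW_snoc_aux (p.length + q.length) p q a b le_rfl


lemma sht_W_W (u v : List ℕ+) : sht (W u) (W v) = shtW u v := by
  rw [sht]
  unfold W
  rw [Finsupp.sum_single_index (by simp)]
  rw [Finsupp.sum_single_index (by simp)]
  simp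

lemma W_mem_yH1 (k : ℕ+) (ks : List ℕ+) : W (k :: ks) ∈ yH1 :=
  Submodule.subset_span ⟨k, ks, rfl⟩

lemma shtW_mem_shtSpan (a b : List ℕ+) (ha : a ≠ []) (hb : b ≠ []) :
    shtW a b ∈ shtSpan := by
  obtain ⟨k, a, rfl⟩ := List.exists_cons_of_ne_nil ha
  obtain ⟨l, b, rfl⟩ := List.exists_cons_of_ne_nil hb
  exact Submodule.subset_span ⟨W (k :: a), W_mem_yH1 k a, W (l :: b), W_mem_yH1 l b,
    (sht_W_W _ _).symm⟩

/-- Lemma A: `mulRk k (shtW p v) ≡ (-1)^{|p|} W (v ++ k :: p.reverse)` mod `shtSpan`. -/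
lemma mulRk_shtW_mod (p : List ℕ+) : ∀ (v : List ℕ+) (k : ℕ+),
    mulRk k (shtW p v) - ((-1 : ℚ)) ^ p.length • W (v ++ k :: p.reverse) ∈ shtSpan := by
  induction p using List.reverseRecOn with
  | nil =>
    intro v k
    simp [shtW_nil_left, mulRk_W]
  | append_singleton p m ih =>
    intro v k
    have hsnoc := shtW_snoc p v m k
    have key : mulRk k (shtW (p ++ [m]) v) =
        shtW (p ++ [m]) (v ++ [k]) - mulRk m (shtW p (v ++ [k])) := by
      rw [hsnoc]; abel
    rw [key]
    have h1 : shtW (p ++ [m]) (v ++ [k]) ∈ shtSpan :=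
      shtW_mem_shtSpan _ _ (by simp) (by simp)
    have h2 := ih (v ++ [k]) m
    have : shtW (p ++ [m]) (v ++ [k]) - mulRk m (shtW p (v ++ [k])) -
        ((-1 : ℚ)) ^ (p ++ [m]).length • W (v ++ k :: (p ++ [m]).reverse) =
        shtW (p ++ [m]) (v ++ [k]) -
          (mulRk m (shtW p (v ++ [k])) - ((-1 : ℚ)) ^ p.length • W ((v ++ [k]) ++ m :: p.reverse)) := by
      simp only [List.length_append, List.reverse_append, List.reverse_singleton,
        List.length_singleton, List.singleton_append, List.append_assoc, List.cons_append,
        List.nil_append]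
      rw [pow_succ]
      module
    rw [this]
    exact Submodule.sub_mem _ h1 h2


lemma rhoW_mod (ks : List ℕ+) :
    rhoW ks - ((ks.length : ℚ) * (-1) ^ (ks.length - 1)) • W ks.reverse ∈ shtSpan := by
  rw [rhoW]
  have hconst : ((ks.length : ℚ) * (-1) ^ (ks.length - 1)) • W ks.reverse
      = ∑ _i : Fin ks.length, ((-1 : ℚ)) ^ (ks.length - 1) • W ks.reverse := by
    rw [Finset.sum_const, Finset.card_univ, Fintype.card_fin, mul_smul,
      Nat.cast_smul_eq_nsmul]
  rw [hconst, ← Finset.sum_sub_distrib]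
  refine Submodule.sum_mem _ fun i _ => ?_
  rw [sht_W_W]
  have hA := mulRk_shtW_mod (ks.take (i : ℕ)) ((ks.drop ((i : ℕ) + 1)).reverse) (ks.get i)
  have hmem := Submodule.smul_mem shtSpan (((-1 : ℚ)) ^ (ks.length - 1 - (i : ℕ))) hA
  have hlen : (ks.take (i : ℕ)).length = (i : ℕ) := by
    simp [List.length_take, Nat.min_eq_left (le_of_lt i.isLt)]
  have hlist : (ks.drop ((i : ℕ) + 1)).reverse ++ ks.get i :: (ks.take (i : ℕ)).reverse
      = ks.reverse := by
    conv_rhs => rw [← List.take_append_drop (i : ℕ) ks]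
    rw [← List.getElem_cons_drop i.isLt, List.reverse_append, List.reverse_cons,
      List.append_assoc, List.singleton_append]
    rfl
  rw [smul_sub, smul_smul, ← pow_add] at hmem
  rw [hlen, hlist] at hmem
  have hexp : ks.length - 1 - (i : ℕ) + (i : ℕ) = ks.length - 1 := by
    have := i.isLt; omega
  rw [hexp] at hmem
  exact hmem

/-- Reversal as a plain function. -/
noncomputable def RvF (h : H1) : H1 := Finsupp.mapDomain List.reverse h

lemma RvF_W (w : List ℕ+) : RvF (W w) = W w.reverse := by
  simp [RvF, W, Finsupp.mapDomain_single]
lemma RvF_add (g h : H1) : RvF (g + h) = RvF g + RvF h := Finsupp.mapDomain_add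
lemma RvF_consL (a : ℕ+) (h : H1) : RvF (consL a h) = mulRk a (RvF h) := by
  rw [RvF, consL, ← Finsupp.mapDomain_comp, RvF, mulRk, ← Finsupp.mapDomain_comp]
  congr 1
  funext w
  simp

lemma RvF_shtW_aux : ∀ n (u v : List ℕ+), u.length + v.length ≤ n →
    RvF (shtW u v) = shtW u.reverse v.reverse := by
  intro n
  induction n with
  | zero =>
    intro u v h
    cases u <;> cases v <;> simp at h
    simp [shtW_nil_left, RvF_W]
  | succ n ih =>
    intro u v hle
    match u, v with
    | [], v => simp [shtW_nil_left, RvF_W]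
    | a :: u', [] => simp [shtW_nil_right, RvF_W]
    | a :: u', b :: v' =>
      have h1 := ih u' (b :: v') (by simp at hle ⊢; omega)
      have h2 := ih (a :: u') v' (by simp at hle ⊢; omega)
      rw [shtW_cons, RvF_add, RvF_consL, RvF_consL, h1, h2]
      rw [List.reverse_cons, List.reverse_cons, shtW_snoc]

lemma RvF_shtW (u v : List ℕ+) : RvF (shtW u v) = shtW u.reverse v.reverse :=
  RvF_shtW_aux _ u v le_rfl

lemma shtW_support_aux : ∀ n (u v : List ℕ+), u.length + v.length ≤ n →
    ∀ l ∈ (shtW u v).support, l.length = u.length + v.length := by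
  intro n
  induction n with
  | zero =>
    intro u v h
    cases u <;> cases v <;> simp at h
    simp [shtW_nil_left, W, Finsupp.support_single_ne_zero]
  | succ n ih =>
    intro u v hle
    match u, v with
    | [], v =>
      simp [shtW_nil_left, W, Finsupp.support_single_ne_zero]
    | a :: u', [] =>
      simp [shtW_nil_right, W, Finsupp.support_single_ne_zero]
    | a :: u', b :: v' =>
      have h1 := ih u' (b :: v') (by simp at hle ⊢; omega)
      have h2 := ih (a :: u') v' (by simp at hle ⊢; omega)
      intro l hl
      rw [shtW_cons] at hl
      have hl' := Finsupp.support_add hl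
      rw [Finset.mem_union] at hl'
      rcases hl' with hl' | hl' <;>
        · have := Finsupp.mapDomain_support hl'
          rw [Finset.mem_image] at this
          obtain ⟨w, hw, rfl⟩ := this
          first
            | (have := h1 w hw; simp at this ⊢; omega)
            | (have := h2 w hw; simp at this ⊢; omega)

noncomputable def rhoL : H1 →ₗ[ℚ] H1 :=
  Finsupp.lsum ℚ fun ks => LinearMap.toSpanSingleton ℚ H1 (rhoW ks)

lemma rho_eq (h : H1) : rho h = rhoL h := by
  rw [rho, rhoL, Finsupp.lsum_apply]
  rfl

noncomputable def TL : H1 →ₗ[ℚ] H1 :=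
  Finsupp.lsum ℚ fun ks =>
    LinearMap.toSpanSingleton ℚ H1 (((ks.length : ℚ) * (-1) ^ (ks.length - 1)) • W ks.reverse)

noncomputable def TL' : H1 →ₗ[ℚ] H1 :=
  Finsupp.lsum ℚ fun ks =>
    LinearMap.toSpanSingleton ℚ H1 (((ks.length : ℚ)⁻¹ * (-1) ^ (ks.length - 1)) • W ks.reverse)

lemma rho_sub_TL_mem (u : H1) : rhoL u - TL u ∈ shtSpan := by
  induction u using Finsupp.induction_linear with
  | zero => simpa using Submodule.zero_mem shtSpan
  | add f g hf hg =>
    have : rhoL (f + g) - TL (f + g) = (rhoL f - TL f) + (rhoL g - TL g) := by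
      rw [map_add, map_add]; abel
    rw [this]; exact Submodule.add_mem _ hf hg
  | single ks c =>
    rw [rhoL, TL, Finsupp.lsum_single, Finsupp.lsum_single,
      LinearMap.toSpanSingleton_apply, LinearMap.toSpanSingleton_apply, ← smul_sub]
    exact Submodule.smul_mem _ c (rhoW_mod ks)

lemma TL'_TL_id (u : H1) (hu : u ∈ yH1) : TL' (TL u) = u := by
  refine Submodule.span_induction ?_ ?_ ?_ ?_ hu
  · rintro x ⟨k, ks, rfl⟩
    have hT : TL (W (k :: ks)) =
        (((k :: ks).length : ℚ) * (-1) ^ ((k :: ks).length - 1)) • W (k :: ks).reverse := by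
      rw [W, TL, Finsupp.lsum_single, LinearMap.toSpanSingleton_apply, one_smul]
    have hT' : TL' (W ((k :: ks).reverse)) =
        ((((k :: ks).reverse).length : ℚ)⁻¹ * (-1) ^ (((k :: ks).reverse).length - 1)) •
          W ((k :: ks).reverse.reverse) := by
      rw [W, TL', Finsupp.lsum_single, LinearMap.toSpanSingleton_apply, one_smul]
    rw [hT, map_smul, hT', List.length_reverse, List.reverse_reverse, smul_smul]
    convert one_smul ℚ (W (k :: ks)) using 2
    have hr : (((k :: ks).length : ℕ) : ℚ) ≠ 0 := Nat.cast_ne_zero.mpr (by simp)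
    field_simp
    rw [← pow_mul, mul_comm, pow_mul]
    norm_num
  · simp
  · intro x y _ _ hx hy; rw [map_add, map_add, hx, hy]
  · intro a x _ hx; rw [map_smul, map_smul, hx]

lemma TL'_homog (n : ℕ) (h : H1) (hh : ∀ l ∈ h.support, l.length = n) :
    TL' h = (((n : ℚ))⁻¹ * (-1) ^ (n - 1)) • RvF h := by
  rw [TL', Finsupp.lsum_apply, RvF, Finsupp.mapDomain, Finsupp.smul_sum]
  refine Finsupp.sum_congr fun ks hks => ?_
  rw [← hh ks hks, LinearMap.toSpanSingleton_apply, W, Finsupp.smul_single,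
    Finsupp.smul_single, Finsupp.smul_single]
  congr 1
  simp [smul_eq_mul]
  ring

/-- The span of shuffles of nonempty words. -/
noncomputable def shtSpan' : Submodule ℚ H1 :=
  Submodule.span ℚ {h | ∃ a b : List ℕ+, a ≠ [] ∧ b ≠ [] ∧ h = shtW a b}

noncomputable def shtI (u : List ℕ+) : H1 →ₗ[ℚ] H1 :=
  Finsupp.lsum ℚ fun v => LinearMap.toSpanSingleton ℚ H1 (shtW u v)

noncomputable def shtB : H1 →ₗ[ℚ] H1 →ₗ[ℚ] H1 :=
  Finsupp.lsum ℚ fun u => LinearMap.toSpanSingleton ℚ (H1 →ₗ[ℚ] H1) (shtI u)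

lemma sht_eq (g h : H1) : sht g h = shtB g h := by
  rw [sht, shtB, Finsupp.lsum_apply, Finsupp.sum, Finsupp.sum, LinearMap.sum_apply]
  refine Finset.sum_congr rfl fun u _ => ?_
  rw [LinearMap.toSpanSingleton_apply, LinearMap.smul_apply, shtI, Finsupp.lsum_apply,
    Finsupp.smul_sum]
  refine Finsupp.sum_congr fun v _ => ?_
  rw [LinearMap.toSpanSingleton_apply, smul_smul]

lemma sht_mem_span' (u : H1) (hu : u ∈ yH1) (v : H1) (hv : v ∈ yH1) :
    sht u v ∈ shtSpan' := by
  rw [sht_eq]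
  revert v hv
  refine Submodule.span_induction (p := fun x _ => ∀ v ∈ yH1, shtB x v ∈ shtSpan')
    ?_ ?_ ?_ ?_ hu
  · rintro x ⟨k, ks, rfl⟩ v hv
    refine Submodule.span_induction (p := fun y _ => shtB (W (k :: ks)) y ∈ shtSpan')
      ?_ ?_ ?_ ?_ hv
    · rintro y ⟨l, ls, rfl⟩
      rw [← sht_eq, sht_W_W]
      exact Submodule.subset_span ⟨k :: ks, l :: ls, by simp, by simp, rfl⟩
    · simp
    · intro y z _ _ hy hz; rw [map_add]; exact Submodule.add_mem _ hy hz
    · intro a y _ hy; rw [map_smul]; exact Submodule.smul_mem _ a hy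
  · intro v hv; rw [map_zero]; simp
  · intro x y _ _ hx hy v hv
    rw [map_add, LinearMap.add_apply]
    exact Submodule.add_mem _ (hx v hv) (hy v hv)
  · intro a x _ hx v hv
    rw [map_smul, LinearMap.smul_apply]
    exact Submodule.smul_mem _ a (hx v hv)

lemma shtSpan_le_span' : shtSpan ≤ shtSpan' := by
  rw [shtSpan, Submodule.span_le]
  rintro x ⟨u, hu, v, hv, rfl⟩
  exact sht_mem_span' u hu v hv

lemma TL'_span' (x : H1) (hx : x ∈ shtSpan') : TL' x ∈ shtSpan := by
  refine Submodule.span_induction (p := fun y _ => TL' y ∈ shtSpan) ?_ ?_ ?_ ?_ hx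
  · rintro y ⟨a, b, ha, hb, rfl⟩
    rw [TL'_homog (a.length + b.length) _ (shtW_support_aux _ a b le_rfl)]
    rw [RvF_shtW]
    exact Submodule.smul_mem _ _
      (shtW_mem_shtSpan _ _ (by simpa using ha) (by simpa using hb))
  · simp
  · intro y z _ _ hy hz; rw [map_add]; exact Submodule.add_mem _ hy hz
  · intro a y _ hy; rw [map_smul]; exact Submodule.smul_mem _ a hy

/-- Lemma 8: `ker ρ ⊆ yH ш̃ yH`. -/
theorem rho_kernel_subset (u : H1) (hu : u ∈ yH1) (h0 : rho u = 0) : u ∈ shtSpan := by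
  have h1 : TL u ∈ shtSpan := by
    have hm := rho_sub_TL_mem u
    rw [← rho_eq, h0, zero_sub] at hm
    simpa using Submodule.neg_mem _ hm
  have h3 : TL' (TL u) ∈ shtSpan := TL'_span' _ (shtSpan_le_span' h1)
  rwa [TL'_TL_id u hu] at h3
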